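/- arXiv:1109.5556 — 6 statements merged into one kernel-verified Lean document; each statement's English description precedes it below -/
import Mathlib

section
/- For all m ∈ ℤ and n, n' ∈ ℕ one has 0 ≤ v^{m,0}_{n,n'} = v^{|m|,0}_{n,n'}; moreover, for all m, n, n' ∈ ℕ the matrix elements are monotone decreasing in m: v^{m,0}_{n,n'} ≥ v^{m+1,0}_{n,n'}. -/
open Real

/-- Pochhammer symbol `(x)_a = Γ(x+a)/Γ(x)` for real arguments. -/
noncomputable def poch (x a : ℝ) : ℝ := Real.Gamma (x + a) / Real.Gamma x

/-- Coulomb matrix elements `v^{m,0}_{n,n'}`. -/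
noncomputable def v0 (m : ℤ) (n n' : ℕ) : ℝ :=
  (1 / (Real.pi * Real.sqrt (poch ((n : ℝ) + 1) ((|m| : ℤ) : ℝ) *
      poch ((n' : ℝ) + 1) ((|m| : ℤ) : ℝ)))) *
    ∑ k ∈ Finset.range (min n n' + 1),
      poch ((k : ℝ) + 1) (((|m| : ℤ) : ℝ) - 1/2) /
        (poch ((n : ℝ) - (k : ℝ) + 1/2) (1/2) * poch ((n' : ℝ) - (k : ℝ) + 1/2) (1/2))

/-- Coulomb matrix elements `v^{m,1}_{n,n'}`. -/
noncomputable def v1 (m : ℤ) (n n' : ℕ) : ℝ :=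
  if 0 ≤ m then v0 (m + 1) n n' else v0 (m + 1) (n + 1) (n' + 1)

/-- The quadratic form `E_m[a]` at coupling `Z`. -/
noncomputable def Eform (Z : ℝ) (m : ℤ) (a : ℕ → ℝ) : ℝ :=
  (∑' n : ℕ, 2 * Real.sqrt ((n : ℝ) + ((max m 0 : ℤ) : ℝ) + 1) * a n ^ 2)
    - (Z / 2) * ∑' n : ℕ, ∑' n' : ℕ, a n * (v0 m n n' + v1 m n n') * a n'

/-- The critical coupling constant `Z_c`. -/
noncomputable def Zc : ℝ :=
  (Real.Gamma (1/4) ^ 4 / (8 * Real.pi ^ 2) + 8 * Real.pi ^ 2 / Real.Gamma (1/4) ^ 4)⁻¹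

/-! `v0 m` depends on `m` only through `a = |m|`, and all its summands are positive. Raising `a`
by one multiplies the `k`-th summand by `k + a + 1/2` and the normalisation by
`√((n + 1 + a) (n' + 1 + a))`, which is at least as large because `k ≤ min n n'`. -/

open Finset

lemma poch_pos {x a : ℝ} (hx : 0 < x) (hxa : 0 < x + a) : 0 < poch x a :=
  div_pos (Gamma_pos_of_pos hxa) (Gamma_pos_of_pos hx)

lemma poch_add_one {x a : ℝ} (h : x + a ≠ 0) : poch x (a + 1) = poch x a * (x + a) := by
  rw [poch, poch, ← add_assoc, Gamma_add_one h]
  ring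

noncomputable def coulombTerm (a : ℝ) (n n' k : ℕ) : ℝ :=
  poch ((k : ℝ) + 1) (a - 1/2) /
    (poch ((n : ℝ) - (k : ℝ) + 1/2) (1/2) * poch ((n' : ℝ) - (k : ℝ) + 1/2) (1/2))

noncomputable def coulombV (a : ℝ) (n n' : ℕ) : ℝ :=
  (1 / (π * √(poch ((n : ℝ) + 1) a * poch ((n' : ℝ) + 1) a))) *
    ∑ k ∈ range (min n n' + 1), coulombTerm a n n' k

lemma v0_eq_coulombV (m : ℤ) (n n' : ℕ) : v0 m n n' = coulombV (|m| : ℤ) n n' := rfl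

section

variable {a : ℝ} {n n' k : ℕ}

lemma mem_range_min_succ_iff : k ∈ range (min n n' + 1) ↔ k ≤ n ∧ k ≤ n' := by
  rw [mem_range, Nat.lt_succ_iff, le_min_iff]

lemma coulombTerm_pos (ha : -1/2 < a) (hn : k ≤ n) (hn' : k ≤ n') :
    0 < coulombTerm a n n' k := by
  have hkn : (k : ℝ) ≤ n := by exact_mod_cast hn
  have hkn' : (k : ℝ) ≤ n' := by exact_mod_cast hn'
  have hk : (0 : ℝ) ≤ k := k.cast_nonneg
  exact div_pos (poch_pos (by linarith) (by linarith))
    (mul_pos (poch_pos (by linarith) (by linarith)) (poch_pos (by linarith) (by linarith)))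

lemma coulombV_nonneg (ha : -1/2 < a) : 0 ≤ coulombV a n n' := by
  refine mul_nonneg (by positivity) (sum_nonneg fun k hk => ?_)
  rw [mem_range_min_succ_iff] at hk
  exact (coulombTerm_pos ha hk.1 hk.2).le

lemma coulombTerm_add_one (ha : -1/2 < a) :
    coulombTerm (a + 1) n n' k = coulombTerm a n n' k * (k + a + 1/2) := by
  have hk : (0 : ℝ) ≤ k := k.cast_nonneg
  rw [coulombTerm, coulombTerm, show a + 1 - 1/2 = (a - 1/2) + 1 by ring,
    poch_add_one (by linarith)]
  ring

lemma sqrt_poch_mul_poch_add_one (ha : -1/2 < a) :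
    √(poch ((n : ℝ) + 1) (a + 1) * poch ((n' : ℝ) + 1) (a + 1)) =
      √(poch ((n : ℝ) + 1) a * poch ((n' : ℝ) + 1) a) * √((n + 1 + a) * (n' + 1 + a)) := by
  have hn : (0 : ℝ) ≤ n := n.cast_nonneg
  have hn' : (0 : ℝ) ≤ n' := n'.cast_nonneg
  rw [poch_add_one (by linarith), poch_add_one (by linarith), ← sqrt_mul]
  · congr 1
    ring
  · exact (mul_pos (poch_pos (by linarith) (by linarith))
      (poch_pos (by linarith) (by linarith))).le

lemma add_half_le_sqrt_mul (ha : -1/2 < a) (hn : k ≤ n) (hn' : k ≤ n') :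
    (k : ℝ) + a + 1/2 ≤ √((n + 1 + a) * (n' + 1 + a)) := by
  have hkn : (k : ℝ) ≤ n := by exact_mod_cast hn
  have hkn' : (k : ℝ) ≤ n' := by exact_mod_cast hn'
  have hk : (0 : ℝ) ≤ k := k.cast_nonneg
  rw [le_sqrt (by linarith) (by nlinarith)]
  nlinarith

lemma coulombV_add_one_le (ha : -1/2 < a) : coulombV (a + 1) n n' ≤ coulombV a n n' := by
  have hn : (0 : ℝ) ≤ n := n.cast_nonneg
  have hn' : (0 : ℝ) ≤ n' := n'.cast_nonneg
  set P := √(poch ((n : ℝ) + 1) a * poch ((n' : ℝ) + 1) a) with hP_def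
  set S := √((n + 1 + a) * (n' + 1 + a)) with hS_def
  have hP : 0 < P := sqrt_pos.mpr (mul_pos (poch_pos (by linarith) (by linarith))
    (poch_pos (by linarith) (by linarith)))
  have hS : 0 < S := sqrt_pos.mpr (mul_pos (by linarith) (by linarith))
  calc coulombV (a + 1) n n'
      = 1 / (π * (P * S)) * ∑ k ∈ range (min n n' + 1), coulombTerm a n n' k * (k + a + 1/2) := by
        rw [coulombV, sqrt_poch_mul_poch_add_one ha, ← hP_def, ← hS_def]
        simp only [coulombTerm_add_one ha]
    _ ≤ 1 / (π * (P * S)) * ∑ k ∈ range (min n n' + 1), coulombTerm a n n' k * S := by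
        refine mul_le_mul_of_nonneg_left (sum_le_sum fun k hk => ?_) (by positivity)
        rw [mem_range_min_succ_iff] at hk
        exact mul_le_mul_of_nonneg_left (add_half_le_sqrt_mul ha hk.1 hk.2)
          (coulombTerm_pos ha hk.1 hk.2).le
    _ = coulombV a n n' := by
        rw [coulombV, ← hP_def, ← sum_mul]
        field_simp

end

theorem v0_pos_symm_monotone :
    (∀ (m : ℤ) (n n' : ℕ), 0 ≤ v0 m n n' ∧ v0 m n n' = v0 |m| n n') ∧
    (∀ (m n n' : ℕ), v0 ((m : ℤ) + 1) n n' ≤ v0 (m : ℤ) n n') := by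
  refine ⟨fun m n n' => ⟨?_, ?_⟩, fun m n n' => ?_⟩
  · have hm : (0 : ℝ) ≤ ((|m| : ℤ) : ℝ) := by positivity
    rw [v0_eq_coulombV]
    exact coulombV_nonneg (by linarith)
  · rw [v0_eq_coulombV, v0_eq_coulombV, abs_abs]
  · have hm : (0 : ℝ) ≤ m := m.cast_nonneg
    rw [v0_eq_coulombV, v0_eq_coulombV, abs_of_nonneg (by positivity : (0 : ℤ) ≤ (m : ℤ) + 1),
      Nat.abs_cast]
    push_cast
    exact coulombV_add_one_le (by linarith)
end

section
/- For all n, n' ∈ ℕ one has v^{0,0}_{n+1,n'+1} ≤ v^{0,0}_{n,n'}, i.e. the m = 0 Coulomb matrix elements decrease along the diagonal shift of both indices. -/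
open Real

/-!
Write `a k = (1/2)_k / k! = Γ(k + 1/2) / (√π k!)`. Then
`v^{0,0}_{n,n'} = √π ∑_{k ≤ min n n'} a k · a (n - k) · a (n' - k)`, the sequence `a` is positive and
decreasing, and by Chu–Vandermonde (`(1 - x)^{-1/2} · (1 - x)^{-1/2} = (1 - x)^{-1}`) its
self-convolution is identically `1`. Peeling off the `k = 0` term of the shifted sum, the constancy
of the convolution gives `∑_{k ≤ n} (a k - a (k + 1)) · a (n - k) = a 0 · a (n + 1)`, and together with
`a (n' + 1) ≤ a (n' - k)` this pays exactly for the peeled-off term.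
-/

open Finset Nat

theorem Ring.multichoose_add {R : Type*} [CommRing R] [BinomialRing R] (r s : R) (n : ℕ) :
    Ring.multichoose (r + s) n =
      ∑ ij ∈ antidiagonal n, Ring.multichoose r ij.1 * Ring.multichoose s ij.2 := by
  have h := Ring.add_choose_eq (r := -r) (s := -s) n (Commute.all _ _)
  rw [← neg_add, Ring.choose_neg'] at h
  simp only [Ring.choose_neg'] at h
  rw [← smul_left_cancel_iff (Int.negOnePow n), h, smul_sum]
  refine sum_congr rfl fun ij hij => ?_
  rw [← mem_antidiagonal.mp hij, Nat.cast_add, Int.negOnePow_add, smul_mul_smul_comm]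

theorem Real.Gamma_add_nat_eq_ascPochhammer_eval_mul {x : ℝ} (hx : ∀ k : ℕ, x ≠ -k) (n : ℕ) :
    Gamma (x + n) = (ascPochhammer ℝ n).eval x * Gamma x := by
  induction n with
  | zero => simp
  | succ n ih =>
    have hxn : x + n ≠ 0 := fun h => hx n (by linarith)
    rw [Nat.cast_succ, ← add_assoc, Gamma_add_one hxn, ih, ascPochhammer_succ_eval]
    ring

theorem Real.Gamma_nat_add_half_eq_multichoose (k : ℕ) :
    Gamma (k + 1 / 2) = √π * k ! * Ring.multichoose (1 / 2 : ℝ) k := by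
  have hx : ∀ j : ℕ, (1 / 2 : ℝ) ≠ -j := fun j h => by
    have : (0 : ℝ) ≤ j := j.cast_nonneg
    linarith
  have hfac : (k ! : ℝ) * Ring.multichoose (1 / 2 : ℝ) k = (ascPochhammer ℝ k).eval (1 / 2) := by
    rw [← nsmul_eq_mul, Ring.factorial_nsmul_multichoose_eq_ascPochhammer,
      Polynomial.ascPochhammer_smeval_eq_eval]
  rw [add_comm, Gamma_add_nat_eq_ascPochhammer_eval_mul hx, Gamma_one_half_eq, ← hfac]
  ring

theorem multichoose_half_pos (k : ℕ) : 0 < Ring.multichoose (1 / 2 : ℝ) k := by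
  have h := Gamma_pos_of_pos (by positivity : (0 : ℝ) < k + 1 / 2)
  rw [Gamma_nat_add_half_eq_multichoose] at h
  exact pos_of_mul_pos_right h (by positivity)

theorem multichoose_half_succ (k : ℕ) :
    Ring.multichoose (1 / 2 : ℝ) (k + 1) =
      (k + 1 / 2) / (k + 1) * Ring.multichoose (1 / 2 : ℝ) k := by
  have h := Gamma_add_one (by positivity : (k + 1 / 2 : ℝ) ≠ 0)
  rw [show (k + 1 / 2 : ℝ) + 1 = (k + 1 : ℕ) + 1 / 2 by push_cast; ring,
    Gamma_nat_add_half_eq_multichoose, Gamma_nat_add_half_eq_multichoose, factorial_succ] at h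
  push_cast at h
  have hc : √π * k ! ≠ 0 := by positivity
  have hrec : (k + 1) * Ring.multichoose (1 / 2 : ℝ) (k + 1) =
      (k + 1 / 2) * Ring.multichoose (1 / 2 : ℝ) k :=
    mul_left_cancel₀ hc (by linear_combination h)
  rw [div_mul_eq_mul_div, eq_div_iff (by positivity)]
  linear_combination hrec

theorem multichoose_half_antitone : Antitone (Ring.multichoose (1 / 2 : ℝ)) := by
  refine antitone_nat_of_succ_le fun k => ?_
  rw [multichoose_half_succ]
  refine mul_le_of_le_one_left (multichoose_half_pos k).le ?_
  rw [div_le_one (by positivity)]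
  linarith

theorem sum_antidiagonal_multichoose_half_mul (n : ℕ) :
    ∑ ij ∈ antidiagonal n, Ring.multichoose (1 / 2 : ℝ) ij.1 * Ring.multichoose (1 / 2 : ℝ) ij.2
      = 1 := by
  rw [← Ring.multichoose_add, add_halves, Ring.multichoose_one]

noncomputable def tripleConv (a : ℕ → ℝ) (n n' : ℕ) : ℝ :=
  ∑ k ∈ range (min n n' + 1), a k * a (n - k) * a (n' - k)

section TripleConv

variable {a : ℕ → ℝ}

theorem tripleConv_comm (n n' : ℕ) : tripleConv a n n' = tripleConv a n' n := by
  simp only [tripleConv, min_comm n, mul_right_comm]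

theorem sum_range_sub_succ_mul_eq
    (hconv : ∀ n, ∑ ij ∈ antidiagonal (n + 1), a ij.1 * a ij.2 =
      ∑ ij ∈ antidiagonal n, a ij.1 * a ij.2) (n : ℕ) :
    ∑ k ∈ range (n + 1), (a k - a (k + 1)) * a (n - k) = a 0 * a (n + 1) := by
  have h := hconv n
  rw [Nat.sum_antidiagonal_succ,
    Nat.sum_antidiagonal_eq_sum_range_succ (fun i j => a (i + 1) * a j),
    Nat.sum_antidiagonal_eq_sum_range_succ (fun i j => a i * a j)] at h
  simp only [sub_mul, sum_sub_distrib]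
  linarith

theorem tripleConv_succ_succ_le_of_le (ha : Antitone a) (ha₀ : ∀ k, 0 ≤ a k)
    (hconv : ∀ n, ∑ ij ∈ antidiagonal (n + 1), a ij.1 * a ij.2 =
      ∑ ij ∈ antidiagonal n, a ij.1 * a ij.2) {n n' : ℕ} (h : n ≤ n') :
    tripleConv a (n + 1) (n' + 1) ≤ tripleConv a n n' := by
  have hshift : tripleConv a (n + 1) (n' + 1) = a 0 * a (n + 1) * a (n' + 1) +
      ∑ k ∈ range (n + 1), a (k + 1) * a (n - k) * a (n' - k) := by
    rw [tripleConv, min_eq_left (by omega), sum_range_succ', add_comm]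
    simp
  have hdrop : a 0 * a (n + 1) * a (n' + 1) ≤
      ∑ k ∈ range (n + 1), (a k - a (k + 1)) * a (n - k) * a (n' - k) := by
    rw [← sum_range_sub_succ_mul_eq hconv, sum_mul]
    refine sum_le_sum fun k hk => ?_
    have hk : k ≤ n := Nat.lt_succ_iff.mp (mem_range.mp hk)
    exact mul_le_mul_of_nonneg_left (ha (by omega))
      (mul_nonneg (sub_nonneg.mpr (ha k.le_succ)) (ha₀ _))
  rw [hshift, tripleConv, min_eq_left h]
  simp only [sub_mul, sum_sub_distrib] at hdrop
  linarith

theorem tripleConv_succ_succ_le (ha : Antitone a) (ha₀ : ∀ k, 0 ≤ a k)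
    (hconv : ∀ n, ∑ ij ∈ antidiagonal (n + 1), a ij.1 * a ij.2 =
      ∑ ij ∈ antidiagonal n, a ij.1 * a ij.2) (n n' : ℕ) :
    tripleConv a (n + 1) (n' + 1) ≤ tripleConv a n n' := by
  rcases le_total n n' with h | h
  · exact tripleConv_succ_succ_le_of_le ha ha₀ hconv h
  · rw [tripleConv_comm, tripleConv_comm n]
    exact tripleConv_succ_succ_le_of_le ha ha₀ hconv h

end TripleConv

theorem poch_self_zero {x : ℝ} (hx : Gamma x ≠ 0) : poch x 0 = 1 := by
  rw [poch, add_zero, div_self hx]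

theorem poch_nat_add_one_neg_half (k : ℕ) :
    poch (k + 1) (-(1 / 2)) = √π * Ring.multichoose (1 / 2 : ℝ) k := by
  rw [poch, show (k + 1 : ℝ) + -(1 / 2) = k + 1 / 2 by ring, Gamma_nat_add_half_eq_multichoose,
    Gamma_nat_eq_factorial]
  field_simp

theorem poch_nat_add_half_half (j : ℕ) :
    poch (j + 1 / 2) (1 / 2) = (√π * Ring.multichoose (1 / 2 : ℝ) j)⁻¹ := by
  rw [poch, show (j + 1 / 2 : ℝ) + 1 / 2 = j + 1 by ring, Gamma_nat_eq_factorial,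
    Gamma_nat_add_half_eq_multichoose]
  field_simp

theorem v0_zero_eq_tripleConv (n n' : ℕ) :
    v0 0 n n' = √π * tripleConv (Ring.multichoose (1 / 2 : ℝ)) n n' := by
  have hpoch : ∀ m : ℕ, poch (m + 1) 0 = 1 := fun m =>
    poch_self_zero (Gamma_pos_of_pos (by positivity)).ne'
  have hsub : ∀ {m k : ℕ}, k ≤ m → (m : ℝ) - k + 1 / 2 = (m - k : ℕ) + 1 / 2 := fun h => by
    push_cast [h]; ring
  rw [v0, tripleConv, mul_sum]
  simp only [abs_zero, Int.cast_zero, hpoch, mul_one, Real.sqrt_one, zero_sub]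
  rw [mul_sum]
  refine sum_congr rfl fun k hk => ?_
  have hk := mem_range_succ_iff.mp hk
  rw [hsub (hk.trans (min_le_left n n')), hsub (hk.trans (min_le_right n n')),
    poch_nat_add_one_neg_half, poch_nat_add_half_half, poch_nat_add_half_half]
  have := multichoose_half_pos (n - k)
  have := multichoose_half_pos (n' - k)
  field_simp
  rw [sq_sqrt pi_pos.le]

theorem v0_diagonal_shift_decreasing (n n' : ℕ) :
    v0 0 (n + 1) (n' + 1) ≤ v0 0 n n' := by
  rw [v0_zero_eq_tripleConv, v0_zero_eq_tripleConv]
  refine mul_le_mul_of_nonneg_left ?_ (sqrt_nonneg π)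
  exact tripleConv_succ_succ_le multichoose_half_antitone (fun k => (multichoose_half_pos k).le)
    (fun n => by rw [sum_antidiagonal_multichoose_half_mul, sum_antidiagonal_multichoose_half_mul])
    n n'
end

section
/- For every finitely supported sequence a : ℕ → ℝ with a_n ≥ 0 for all n, one has Σ_{n,n'} a_n v^{0,0}_{n,n'} a_{n'} ≤ (Γ(1/4)⁴/(2π²)) · Σ_{n=0}^∞ (Γ(n + 3/4)/Γ(n + 1/4)) a_n². -/
open Real

/-!
Put `c n = Γ(n + 1/2) / Γ(n + 1)` and `h n = Γ(n + 1/4) / Γ(n + 1)`, the Taylor coefficients of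
`√π (1 - x)^(-1/2)` and `Γ(1/4) (1 - x)^(-1/4)`. Then `v^{0,0}_{n,n'} = π⁻¹ ∑ₖ c k c (n-k) c (n'-k)`
is a symmetric nonnegative kernel, and by the Schur test it suffices to show
`∑_{n'} v^{0,0}_{n,n'} h n' ≤ Γ(1/4)⁴/(2π²) · Γ(n + 3/4)/Γ(n + 1)`.
Exchanging the sums leaves the inner sums `∑ⱼ c j h (j + k)`. Writing `h (j + k)` as a Beta
integral and using `∑ⱼ c j xʲ ≤ √π (1 - x)^(-1/2)`, which follows from the convolution identity
`c * c = π`, bounds them by `√π Γ(1/4)/Γ(3/4) · Γ(k + 1/4)/Γ(k + 1/2)`; the remaining sum over `k`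
is a Chu–Vandermonde convolution `h * c`. The reflection formula `Γ(1/4) Γ(3/4) = π √2` turns the
constant `Γ(1/4)²/Γ(3/4)²` into `Γ(1/4)⁴/(2π²)`.
-/

open Finset

/-- `Γ(a)` times the `n`-th Taylor coefficient of `(1 - x)^(-a)`. -/
noncomputable def gammaRatio (a : ℝ) (n : ℕ) : ℝ := Gamma (n + a) / Gamma (n + 1)

lemma gammaRatio_pos {a : ℝ} (ha : 0 < a) (n : ℕ) : 0 < gammaRatio a n :=
  div_pos (Gamma_pos_of_pos (by positivity)) (Gamma_pos_of_pos (by positivity))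

lemma gammaRatio_zero (a : ℝ) : gammaRatio a 0 = Gamma a := by
  simp [gammaRatio]

lemma gammaRatio_one (n : ℕ) : gammaRatio 1 n = 1 :=
  div_self (Gamma_pos_of_pos (by positivity)).ne'

lemma Gamma_div_Gamma_mul_gammaRatio {a : ℝ} (ha : 0 < a) (b : ℝ) (n : ℕ) :
    Gamma (n + b) / Gamma (n + a) * gammaRatio a n = gammaRatio b n := by
  simp only [gammaRatio]
  field_simp

lemma succ_mul_gammaRatio_succ {a : ℝ} (ha : 0 < a) (n : ℕ) :
    ((n : ℝ) + 1) * gammaRatio a (n + 1) = (n + a) * gammaRatio a n := by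
  simp only [gammaRatio, Nat.cast_succ, add_right_comm _ (1 : ℝ) a,
    Gamma_add_one (by positivity : (n : ℝ) + a ≠ 0),
    Gamma_add_one (by positivity : (n : ℝ) + 1 ≠ 0)]
  field_simp

section FirstOrderRecurrence

variable {u w : ℕ → ℝ} {α β : ℝ}

lemma succ_mul_sum_antidiagonal_succ (hu : ∀ n : ℕ, ((n : ℝ) + 1) * u (n + 1) = (n + α) * u n)
    (hw : ∀ n : ℕ, ((n : ℝ) + 1) * w (n + 1) = (n + β) * w n) (n : ℕ) :
    ((n : ℝ) + 1) * ∑ p ∈ antidiagonal (n + 1), u p.1 * w p.2 =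
      (n + (α + β)) * ∑ p ∈ antidiagonal n, u p.1 * w p.2 := by
  have hsplit : ((n : ℝ) + 1) * ∑ p ∈ antidiagonal (n + 1), u p.1 * w p.2 =
      ∑ p ∈ antidiagonal (n + 1), (p.1 : ℝ) * u p.1 * w p.2 +
        ∑ p ∈ antidiagonal (n + 1), u p.1 * ((p.2 : ℝ) * w p.2) := by
    rw [mul_sum, ← sum_add_distrib]
    refine sum_congr rfl fun p hp => ?_
    have hp : (p.1 : ℝ) + p.2 = n + 1 := by exact_mod_cast mem_antidiagonal.mp hp
    linear_combination (u p.1 * w p.2) * hp.symm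
  rw [hsplit, Nat.sum_antidiagonal_succ, Nat.sum_antidiagonal_succ']
  simp only [Nat.cast_zero, zero_mul, mul_zero, zero_add]
  rw [mul_sum, ← sum_add_distrib]
  refine sum_congr rfl fun p hp => ?_
  have hp : (p.1 : ℝ) + p.2 = n := by exact_mod_cast mem_antidiagonal.mp hp
  push_cast
  linear_combination w p.2 * hu p.1 + u p.1 * hw p.2 + (u p.1 * w p.2) * hp

lemma eq_of_succ_mul_eq (hu : ∀ n : ℕ, ((n : ℝ) + 1) * u (n + 1) = (n + α) * u n)
    (hw : ∀ n : ℕ, ((n : ℝ) + 1) * w (n + 1) = (n + α) * w n) (h0 : u 0 = w 0) : u = w := by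
  funext n
  induction n with
  | zero => exact h0
  | succ n ih =>
    refine mul_left_cancel₀ (by positivity : (n : ℝ) + 1 ≠ 0) ?_
    rw [hu, hw, ih]

end FirstOrderRecurrence

lemma sum_antidiagonal_gammaRatio {a b : ℝ} (ha : 0 < a) (hb : 0 < b) (n : ℕ) :
    ∑ p ∈ antidiagonal n, gammaRatio a p.1 * gammaRatio b p.2 =
      Gamma a * Gamma b / Gamma (a + b) * gammaRatio (a + b) n := by
  have hab : Gamma (a + b) ≠ 0 := (Gamma_pos_of_pos (by positivity)).ne'
  refine congrFun (eq_of_succ_mul_eq (α := a + b)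
    (u := fun n => ∑ p ∈ antidiagonal n, gammaRatio a p.1 * gammaRatio b p.2)
    (w := fun n => Gamma a * Gamma b / Gamma (a + b) * gammaRatio (a + b) n)
    (succ_mul_sum_antidiagonal_succ (succ_mul_gammaRatio_succ ha) (succ_mul_gammaRatio_succ hb))
    (fun n => ?_) ?_) n
  · rw [mul_left_comm, succ_mul_gammaRatio_succ (by positivity), mul_left_comm]
  · simp [gammaRatio_zero, hab]

lemma sum_antidiagonal_gammaRatio_half (n : ℕ) :
    ∑ p ∈ antidiagonal n, gammaRatio (1 / 2) p.1 * gammaRatio (1 / 2) p.2 = π := by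
  rw [sum_antidiagonal_gammaRatio (by norm_num) (by norm_num)]
  norm_num [gammaRatio_one, Gamma_one_half_eq, mul_self_sqrt pi_nonneg]

lemma sq_sum_range_mul_pow_le {c : ℕ → ℝ} {C x : ℝ} (hc : ∀ n, 0 ≤ c n)
    (hC : ∀ m, ∑ p ∈ antidiagonal m, c p.1 * c p.2 = C) (hx0 : 0 ≤ x) (hx1 : x < 1) (N : ℕ) :
    (∑ j ∈ range N, c j * x ^ j) ^ 2 ≤ C / (1 - x) := by
  have hterm : ∀ i j, 0 ≤ c i * c j * x ^ (i + j) := fun i j =>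
    mul_nonneg (mul_nonneg (hc i) (hc j)) (pow_nonneg hx0 _)
  have hC0 : 0 ≤ C := hC 0 ▸ sum_nonneg fun p _ => mul_nonneg (hc p.1) (hc p.2)
  calc (∑ j ∈ range N, c j * x ^ j) ^ 2
      = ∑ i ∈ range N, ∑ j ∈ range N, c i * c j * x ^ (i + j) := by
        rw [sq, sum_mul_sum]
        exact sum_congr rfl fun i _ => sum_congr rfl fun j _ => by ring
    _ ≤ ∑ i ∈ range (2 * N), ∑ j ∈ range (2 * N - i), c i * c j * x ^ (i + j) := by
        refine (sum_le_sum fun i hi =>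
          sum_le_sum_of_subset_of_nonneg ?_ fun j _ _ => hterm i j).trans
            (sum_le_sum_of_subset_of_nonneg ?_ fun i _ _ => sum_nonneg fun j _ => hterm i j)
        · exact range_subset_range.2 (by simp at hi; omega)
        · exact range_subset_range.2 (by omega)
    _ = ∑ m ∈ range (2 * N), ∑ k ∈ range (m + 1), c k * c (m - k) * x ^ (k + (m - k)) :=
        (sum_range_diag_flip _ fun i j => c i * c j * x ^ (i + j)).symm
    _ = C * ∑ m ∈ range (2 * N), x ^ m := by
        rw [mul_sum]
        refine sum_congr rfl fun m _ => ?_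
        rw [← hC m, Nat.sum_antidiagonal_eq_sum_range_succ_mk, sum_mul]
        refine sum_congr rfl fun k hk => ?_
        rw [Nat.add_sub_cancel' (by simp at hk; omega)]
    _ ≤ C / (1 - x) := by
        rw [div_eq_mul_one_div]
        gcongr
        simpa using geom_sum_Ico_le_of_lt_one (m := 0) (n := 2 * N) hx0 hx1

lemma sum_range_gammaRatio_half_mul_pow_le {x : ℝ} (hx0 : 0 ≤ x) (hx1 : x < 1) (N : ℕ) :
    ∑ j ∈ range N, gammaRatio (1 / 2) j * x ^ j ≤ √π * (1 - x) ^ (-(1 / 2 : ℝ)) :=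
  calc ∑ j ∈ range N, gammaRatio (1 / 2) j * x ^ j ≤ √(π / (1 - x)) :=
        le_sqrt_of_sq_le <| sq_sum_range_mul_pow_le (fun n => (gammaRatio_pos one_half_pos n).le)
          sum_antidiagonal_gammaRatio_half hx0 hx1 N
    _ = √π * (1 - x) ^ (-(1 / 2 : ℝ)) := by
        rw [sqrt_div' _ (by linarith), sqrt_eq_rpow (1 - x), rpow_neg (by linarith), div_eq_mul_inv]

lemma betaIntegrand_ofReal {p q x : ℝ} (hx : x ∈ Set.Icc (0 : ℝ) 1) :
    (x : ℂ) ^ ((p : ℂ) - 1) * (1 - (x : ℂ)) ^ ((q : ℂ) - 1) =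
      ((x ^ (p - 1) * (1 - x) ^ (q - 1) : ℝ) : ℂ) := by
  rw [Complex.ofReal_mul, Complex.ofReal_cpow hx.1, Complex.ofReal_cpow (sub_nonneg.2 hx.2)]
  push_cast
  rfl

lemma betaIntegral_ofReal (p q : ℝ) :
    Complex.betaIntegral p q = ((∫ x in (0 : ℝ)..1, x ^ (p - 1) * (1 - x) ^ (q - 1) : ℝ) : ℂ) := by
  rw [Complex.betaIntegral, intervalIntegral.integral_congr fun x hx =>
    betaIntegrand_ofReal (Set.uIcc_of_le (zero_le_one (α := ℝ)) ▸ hx)]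
  exact intervalIntegral.integral_ofReal

lemma intervalIntegrable_rpow_mul_one_sub_rpow {p q : ℝ} (hp : 0 < p) (hq : 0 < q) :
    IntervalIntegrable (fun x : ℝ => x ^ (p - 1) * (1 - x) ^ (q - 1)) MeasureTheory.volume 0 1 := by
  refine (intervalIntegrable_congr fun x hx => ?_).mp
    (Complex.betaIntegral_convergent (u := p) (v := q) (by simpa) (by simpa)).norm
  rw [Set.uIoc_of_le zero_le_one] at hx
  have hx' : x ∈ Set.Icc (0 : ℝ) 1 := Set.Ioc_subset_Icc_self hx
  rw [betaIntegrand_ofReal hx', Complex.norm_real, Real.norm_of_nonneg]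
  exact mul_nonneg (rpow_nonneg hx'.1 _) (rpow_nonneg (sub_nonneg.2 hx'.2) _)

lemma integral_rpow_mul_one_sub_rpow {p q : ℝ} (hp : 0 < p) (hq : 0 < q) :
    ∫ x in (0 : ℝ)..1, x ^ (p - 1) * (1 - x) ^ (q - 1) = Gamma p * Gamma q / Gamma (p + q) := by
  rw [← Complex.ofReal_re (∫ x in (0 : ℝ)..1, _), ← betaIntegral_ofReal,
    ← ProbabilityTheory.beta_eq_betaIntegralReal p q hp hq]
  rfl

lemma gammaRatio_mul_Gamma_eq_integral {b : ℝ} (hb0 : 0 < b) (hb1 : b < 1) (k j : ℕ) :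
    gammaRatio b (j + k) * Gamma (1 - b) =
      ∫ x in (0 : ℝ)..1, x ^ ((k : ℝ) + b - 1) * (1 - x) ^ (-b) * x ^ j := by
  have hexp : ∀ x ∈ Set.uIoo (0 : ℝ) 1, x ^ ((k : ℝ) + b - 1) * (1 - x) ^ (-b) * x ^ j =
      x ^ (((j + k : ℕ) + b : ℝ) - 1) * (1 - x) ^ ((1 - b) - 1) := by
    intro x hx
    rw [Set.uIoo_of_le zero_le_one] at hx
    rw [sub_sub_cancel_left, mul_right_comm, ← rpow_natCast, ← rpow_add hx.1]
    push_cast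
    ring_nf
  rw [intervalIntegral.integral_congr_uIoo hexp,
    integral_rpow_mul_one_sub_rpow (by positivity) (by linarith), gammaRatio,
    add_add_sub_cancel]
  ring

lemma sum_range_gammaRatio_half_mul_gammaRatio_le {b : ℝ} (hb0 : 0 < b) (hb1 : b < 1 / 2)
    (k N : ℕ) :
    ∑ j ∈ range N, gammaRatio (1 / 2) j * gammaRatio b (j + k) ≤
      √π * Gamma (1 / 2 - b) / Gamma (1 - b) * (Gamma (k + b) / Gamma (k + 1 / 2)) := by
  set w : ℝ → ℝ := fun x => x ^ ((k : ℝ) + b - 1) * (1 - x) ^ (-b)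
  set P : ℝ → ℝ := fun x => ∑ j ∈ range N, gammaRatio (1 / 2) j * x ^ j
  have hw : IntervalIntegrable w MeasureTheory.volume 0 1 := by
    simpa only [sub_sub_cancel_left] using
      intervalIntegrable_rpow_mul_one_sub_rpow (p := k + b) (q := 1 - b) (by positivity)
        (by linarith)
  have hwP : ∀ x ∈ Set.Ioo (0 : ℝ) 1,
      w x * P x ≤ √π * (x ^ ((k : ℝ) + b - 1) * (1 - x) ^ ((1 / 2 - b) - 1)) := by
    intro x hx
    have hx1 : 0 < 1 - x := sub_pos.2 hx.2
    calc w x * P x ≤ w x * (√π * (1 - x) ^ (-(1 / 2 : ℝ))) :=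
          mul_le_mul_of_nonneg_left (sum_range_gammaRatio_half_mul_pow_le hx.1.le hx.2 N)
            (mul_nonneg (rpow_nonneg hx.1.le _) (rpow_nonneg hx1.le _))
      _ = √π * (x ^ ((k : ℝ) + b - 1) * (1 - x) ^ ((1 / 2 - b) - 1)) := by
          rw [show (1 / 2 - b) - 1 = -b + -(1 / 2 : ℝ) by ring, rpow_add hx1]
          ring
  have hΓ : 0 < Gamma (1 - b) := Gamma_pos_of_pos (by linarith)
  calc ∑ j ∈ range N, gammaRatio (1 / 2) j * gammaRatio b (j + k)
      = (∑ j ∈ range N, gammaRatio (1 / 2) j * (gammaRatio b (j + k) * Gamma (1 - b))) /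
          Gamma (1 - b) := by
        rw [sum_div]
        exact sum_congr rfl fun j _ => by field_simp
    _ = (∫ x in (0 : ℝ)..1, w x * P x) / Gamma (1 - b) := by
        simp only [gammaRatio_mul_Gamma_eq_integral hb0 (by linarith),
          ← intervalIntegral.integral_const_mul]
        rw [← intervalIntegral.integral_finsetSum fun j _ =>
          ((hw.mul_continuousOn (continuous_pow j).continuousOn).const_mul _)]
        congr 1
        refine intervalIntegral.integral_congr fun x _ => ?_
        simp only [P, w, mul_sum]
        exact sum_congr rfl fun j _ => by ring
    _ ≤ (∫ x in (0 : ℝ)..1, √π * (x ^ ((k : ℝ) + b - 1) * (1 - x) ^ ((1 / 2 - b) - 1))) /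
          Gamma (1 - b) := by
        gcongr
        refine intervalIntegral.integral_mono_on_of_le_Ioo zero_le_one
          (hw.mul_continuousOn (continuous_finsetSum _ fun j _ => by fun_prop).continuousOn)
          ((intervalIntegrable_rpow_mul_one_sub_rpow (by positivity) (by linarith)).const_mul _)
          hwP
    _ = √π * Gamma (1 / 2 - b) / Gamma (1 - b) * (Gamma (k + b) / Gamma (k + 1 / 2)) := by
        rw [intervalIntegral.integral_const_mul,
          integral_rpow_mul_one_sub_rpow (by positivity) (by linarith),
          add_add_sub_cancel]
        ring

lemma poch_zero {x : ℝ} (hx : 0 < x) : poch x 0 = 1 := by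
  simp [poch, (Gamma_pos_of_pos hx).ne']

lemma poch_neg_half (k : ℕ) : poch ((k : ℝ) + 1) (0 - 1 / 2) = gammaRatio (1 / 2) k := by
  simp only [poch, gammaRatio]
  ring_nf

lemma poch_half {n k : ℕ} (hk : k ≤ n) :
    poch ((n : ℝ) - k + 1 / 2) (1 / 2) = (gammaRatio (1 / 2) (n - k))⁻¹ := by
  simp only [poch, gammaRatio, Nat.cast_sub hk, inv_div]
  ring_nf

lemma v0_zero_eq (n n' : ℕ) :
    v0 0 n n' = π⁻¹ * ∑ k ∈ range (min n n' + 1),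
      gammaRatio (1 / 2) k * gammaRatio (1 / 2) (n - k) * gammaRatio (1 / 2) (n' - k) := by
  simp only [v0, abs_zero, Int.cast_zero, poch_zero (Nat.cast_add_one_pos _), mul_one, sqrt_one]
  rw [one_div]
  congr 1
  refine sum_congr rfl fun k hk => ?_
  have hk : k ≤ n ∧ k ≤ n' := by simp only [mem_range] at hk; omega
  rw [poch_neg_half, poch_half hk.1, poch_half hk.2]
  field_simp

lemma v0_zero_nonneg (n n' : ℕ) : 0 ≤ v0 0 n n' := by
  have hc := fun m => (gammaRatio_pos one_half_pos m).le
  rw [v0_zero_eq]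
  exact mul_nonneg (inv_nonneg.2 pi_nonneg)
    (sum_nonneg fun k _ => mul_nonneg (mul_nonneg (hc _) (hc _)) (hc _))

lemma v0_zero_comm (n n' : ℕ) : v0 0 n n' = v0 0 n' n := by
  simp only [v0_zero_eq, min_comm n, mul_right_comm _ (gammaRatio (1 / 2) (n - _))]

lemma sum_sum_mul_mul_le_of_schur_test {ι : Type*} (s : Finset ι) {v : ι → ι → ℝ}
    {w μ : ι → ℝ} (a : ι → ℝ) (hv : ∀ i j, 0 ≤ v i j) (hsymm : ∀ i j, v i j = v j i)
    (hw : ∀ i, 0 < w i) (hrow : ∀ i ∈ s, ∑ j ∈ s, v i j * w j ≤ μ i * w i) :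
    ∑ i ∈ s, ∑ j ∈ s, a i * v i j * a j ≤ ∑ i ∈ s, μ i * a i ^ 2 := by
  set T : ι → ι → ℝ := fun i j => v i j * (a i ^ 2 * w j / w i)
  have hamgm : ∀ i j, a i * v i j * a j ≤ (T i j + T j i) / 2 := by
    intro i j
    have hwi := hw i
    have hwj := hw j
    have h2 : 2 * (a i * a j) ≤ a i ^ 2 * w j / w i + a j ^ 2 * w i / w j := by
      rw [div_add_div _ _ hwi.ne' hwj.ne', le_div_iff₀ (by positivity)]
      nlinarith [sq_nonneg (a i * w j - a j * w i)]
    simp only [T, hsymm j i]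
    nlinarith [mul_le_mul_of_nonneg_left h2 (hv i j)]
  calc ∑ i ∈ s, ∑ j ∈ s, a i * v i j * a j
      ≤ ∑ i ∈ s, ∑ j ∈ s, (T i j + T j i) / 2 :=
        sum_le_sum fun i _ => sum_le_sum fun j _ => hamgm i j
    _ = ∑ i ∈ s, a i ^ 2 / w i * ∑ j ∈ s, v i j * w j := by
        simp only [add_div, sum_add_distrib]
        rw [sum_comm (f := fun i j => T j i / 2), ← sum_add_distrib]
        refine sum_congr rfl fun i _ => ?_
        rw [← sum_add_distrib, mul_sum]
        exact sum_congr rfl fun j _ => by ring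
    _ ≤ ∑ i ∈ s, a i ^ 2 / w i * (μ i * w i) :=
        sum_le_sum fun i hi => mul_le_mul_of_nonneg_left (hrow i hi)
          (div_nonneg (sq_nonneg _) (hw i).le)
    _ = ∑ i ∈ s, μ i * a i ^ 2 :=
        sum_congr rfl fun i _ => by field_simp [(hw i).ne']

lemma Gamma_one_quarter_mul_Gamma_three_quarters : Gamma (1 / 4) * Gamma (3 / 4) = π * √2 := by
  have h := Gamma_mul_Gamma_one_sub (1 / 4)
  rw [show (1 : ℝ) - 1 / 4 = 3 / 4 by norm_num, show π * (1 / 4) = π / 4 by ring,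
    sin_pi_div_four] at h
  rw [h, div_div_eq_mul_div, mul_div_assoc, div_sqrt]

lemma sq_sqrt_pi_mul_Gamma_one_quarter_div_Gamma_three_quarters :
    (√π * (Gamma (1 / 4) / Gamma (3 / 4))) ^ 2 / π = Gamma (1 / 4) ^ 4 / (2 * π ^ 2) := by
  have hΓ : Gamma (3 / 4) = π * √2 / Gamma (1 / 4) := by
    rw [← Gamma_one_quarter_mul_Gamma_three_quarters, mul_div_cancel_left₀ _
      (Gamma_pos_of_pos (by norm_num)).ne']
  rw [mul_pow, sq_sqrt pi_nonneg, hΓ, div_pow, div_pow, mul_pow, sq_sqrt zero_le_two]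
  field_simp

lemma sum_range_v0_zero_mul_gammaRatio_le (n M : ℕ) :
    ∑ n' ∈ range M, v0 0 n n' * gammaRatio (1 / 4) n' ≤
      Gamma (1 / 4) ^ 4 / (2 * π ^ 2) * gammaRatio (3 / 4) n := by
  set c := gammaRatio (1 / 2)
  set h := gammaRatio (1 / 4)
  set K := √π * (Gamma (1 / 4) / Gamma (3 / 4))
  have hc : ∀ m, 0 ≤ c m := fun m => (gammaRatio_pos one_half_pos m).le
  have hinner : ∀ k, ∑ j ∈ range (M - k), c j * h (j + k) ≤
      K * (Gamma (k + 1 / 4) / Gamma (k + 1 / 2)) := by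
    intro k
    have := sum_range_gammaRatio_half_mul_gammaRatio_le (b := 1 / 4) (by norm_num) (by norm_num)
      k (M - k)
    norm_num at this
    simpa only [K, mul_div_assoc] using this
  have hexpand : ∑ n' ∈ range M, v0 0 n n' * h n' =
      π⁻¹ * ∑ k ∈ range (n + 1), c k * c (n - k) * ∑ j ∈ range (M - k), c j * h (j + k) := by
    simp only [v0_zero_eq, mul_assoc, ← mul_sum, sum_mul]
    congr 1
    rw [sum_comm' (t' := range (n + 1)) (s' := fun k => Ico k M)]
    · refine sum_congr rfl fun k _ => ?_
      rw [sum_Ico_eq_sum_range, mul_sum, mul_sum]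
      refine sum_congr rfl fun j _ => ?_
      rw [Nat.add_sub_cancel_left, add_comm k j]
    · intro n' k
      simp only [mem_range, mem_Ico]
      omega
  have hconv : ∑ k ∈ range (n + 1), h k * c (n - k) = K * gammaRatio (3 / 4) n := by
    rw [← Nat.sum_antidiagonal_eq_sum_range_succ (fun i j => h i * c j),
      sum_antidiagonal_gammaRatio (by norm_num) (by norm_num), Gamma_one_half_eq, show (1 : ℝ) / 4 + 1 / 2 = 3 / 4 by norm_num]
    ring
  calc ∑ n' ∈ range M, v0 0 n n' * h n'
      = π⁻¹ * ∑ k ∈ range (n + 1), c k * c (n - k) * ∑ j ∈ range (M - k), c j * h (j + k) :=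
        hexpand
    _ ≤ π⁻¹ * ∑ k ∈ range (n + 1),
          c k * c (n - k) * (K * (Gamma (k + 1 / 4) / Gamma (k + 1 / 2))) := by
        gcongr with k
        · exact mul_nonneg (hc _) (hc _)
        · exact hinner k
    _ = K ^ 2 / π * gammaRatio (3 / 4) n := by
        have hterm : ∀ k : ℕ, c k * c (n - k) * (K * (Gamma (k + 1 / 4) / Gamma (k + 1 / 2))) =
            K * (h k * c (n - k)) := fun k => by
          simp only [c, h, ← Gamma_div_Gamma_mul_gammaRatio one_half_pos (1 / 4) k]
          ring
        rw [sum_congr rfl fun k _ => hterm k, ← mul_sum, hconv]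
        ring
    _ = Gamma (1 / 4) ^ 4 / (2 * π ^ 2) * gammaRatio (3 / 4) n := by
        rw [sq_sqrt_pi_mul_Gamma_one_quarter_div_Gamma_three_quarters]

theorem v00_quadratic_form_bound_general (a : ℕ → ℝ) (ha : (Function.support a).Finite) :
    (∑' n : ℕ, ∑' n' : ℕ, a n * v0 0 n n' * a n') ≤
      Real.Gamma (1/4) ^ 4 / (2 * Real.pi ^ 2) *
        ∑' n : ℕ, (Real.Gamma ((n : ℝ) + 3/4) / Real.Gamma ((n : ℝ) + 1/4)) * a n ^ 2 := by
  obtain ⟨N, hN⟩ := ha.toFinset.exists_nat_subset_range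
  have hzero : ∀ n ∉ range N, a n = 0 := fun n hn =>
    by_contra fun h => hn (hN (ha.mem_toFinset.2 h))
  have hinner : ∀ n, ∑' n', a n * v0 0 n n' * a n' = ∑ n' ∈ range N, a n * v0 0 n n' * a n' :=
    fun n => tsum_eq_sum fun n' hn' => by simp [hzero n' hn']
  rw [tsum_congr hinner, tsum_eq_sum (s := range N) fun n hn => by simp [hzero n hn],
    tsum_eq_sum (s := range N) fun n hn => by simp [hzero n hn], mul_sum]
  simp only [← mul_assoc]
  refine sum_sum_mul_mul_le_of_schur_test _ a v0_zero_nonneg v0_zero_comm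
    (gammaRatio_pos (by norm_num : (0 : ℝ) < 1 / 4)) fun n _ => ?_
  rw [mul_assoc, Gamma_div_Gamma_mul_gammaRatio (by norm_num)]
  exact sum_range_v0_zero_mul_gammaRatio_le n N

theorem v00_quadratic_form_bound (a : ℕ → ℝ) (ha : (Function.support a).Finite)
    (hpos : ∀ n, 0 ≤ a n) :
    (∑' n : ℕ, ∑' n' : ℕ, a n * v0 0 n n' * a n') ≤
      Real.Gamma (1/4) ^ 4 / (2 * Real.pi ^ 2) *
        ∑' n : ℕ, (Real.Gamma ((n : ℝ) + 3/4) / Real.Gamma ((n : ℝ) + 1/4)) * a n ^ 2 :=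
  v00_quadratic_form_bound_general a ha
end

section
/- For every n ∈ ℕ (including n = 0) one has Γ(n + 3/4)/Γ(n + 1/4) ≤ √(n + 3/4) < √(n + 1). -/
open Real

/-- Log-convexity of `Γ` between `x` and `x + 1`, combined with `Γ (x + 1) = x Γ x`. -/
theorem Real.Gamma_add_half_le_sqrt_mul_Gamma {x : ℝ} (hx : 0 < x) :
    Gamma (x + 1 / 2) ≤ √x * Gamma x := by
  have hΓ : 0 ≤ Gamma x := (Gamma_pos_of_pos hx).le
  calc Gamma (x + 1 / 2) = Gamma (1 / 2 * x + 1 / 2 * (x + 1)) := by ring_nf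
    _ ≤ Gamma x ^ (1 / 2 : ℝ) * Gamma (x + 1) ^ (1 / 2 : ℝ) :=
      Gamma_mul_add_mul_le_rpow_Gamma_mul_rpow_Gamma hx (by linarith) one_half_pos one_half_pos
        (by norm_num)
    _ = √x * Gamma x := by
      rw [Gamma_add_one hx.ne', mul_rpow hx.le hΓ, ← sqrt_eq_rpow, ← sqrt_eq_rpow,
        mul_left_comm, ← sqrt_mul hΓ, sqrt_mul_self hΓ, mul_comm]

theorem Real.Gamma_add_half_div_Gamma_le_sqrt {x : ℝ} (hx : 0 < x) :
    Gamma (x + 1 / 2) / Gamma x ≤ √x :=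
  (div_le_iff₀ (Gamma_pos_of_pos hx)).2 (Gamma_add_half_le_sqrt_mul_Gamma hx)

theorem gamma_ratio_le_sqrt (n : ℕ) :
    Real.Gamma ((n : ℝ) + 3/4) / Real.Gamma ((n : ℝ) + 1/4) ≤ Real.sqrt ((n : ℝ) + 3/4) ∧
    Real.sqrt ((n : ℝ) + 3/4) < Real.sqrt ((n : ℝ) + 1) := by
  refine ⟨?_, sqrt_lt_sqrt (by positivity) (by norm_num)⟩
  calc Gamma ((n : ℝ) + 3/4) / Gamma ((n : ℝ) + 1/4)
      = Gamma ((n + 1/4) + 1/2) / Gamma (n + 1/4) := by ring_nf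
    _ ≤ √(n + 1/4) := Gamma_add_half_div_Gamma_le_sqrt (by positivity)
    _ ≤ √(n + 3/4) := sqrt_le_sqrt (by linarith)
end

section
/- For every n ∈ ℕ (including n = 0 and n = 1) one has the strict inequality Γ(n + 5/4)/Γ(n + 3/4) < √(n + 1). -/
/-!
Log-convexity of `Γ` at the midpoint of `x` and `x + 1`, together with `Γ (x + 1) = x Γ x`,
gives `Γ (x + 1/2) ≤ √x Γ x`. Taking `x = n + 3/4` bounds the ratio by `√(n + 3/4) < √(n + 1)`.
-/

namespace Real

theorem Gamma_add_half_le_sqrt_mul_Gamma_s12 {x : ℝ} (hx : 0 < x) :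
    Gamma (x + 1 / 2) ≤ √x * Gamma x := by
  have hΓ : 0 ≤ Gamma x := (Gamma_pos_of_pos hx).le
  calc Gamma (x + 1 / 2) = Gamma (1 / 2 * x + 1 / 2 * (x + 1)) := by ring_nf
    _ ≤ Gamma x ^ (1 / 2 : ℝ) * Gamma (x + 1) ^ (1 / 2 : ℝ) :=
        Gamma_mul_add_mul_le_rpow_Gamma_mul_rpow_Gamma hx (by linarith) (by norm_num)
          (by norm_num) (by norm_num)
    _ = √x * Gamma x := by
        rw [Gamma_add_one hx.ne', mul_rpow hx.le hΓ, ← sqrt_eq_rpow, ← sqrt_eq_rpow,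
          mul_left_comm, mul_self_sqrt hΓ]

theorem Gamma_add_half_div_Gamma_le_sqrt_s12 {x : ℝ} (hx : 0 < x) :
    Gamma (x + 1 / 2) / Gamma x ≤ √x :=
  (div_le_iff₀ (Gamma_pos_of_pos hx)).2 (Gamma_add_half_le_sqrt_mul_Gamma_s12 hx)

end Real

theorem gamma_ratio_lt_sqrt (n : ℕ) :
    Real.Gamma ((n : ℝ) + 5/4) / Real.Gamma ((n : ℝ) + 3/4) < Real.sqrt ((n : ℝ) + 1) :=
  calc Real.Gamma ((n : ℝ) + 5/4) / Real.Gamma ((n : ℝ) + 3/4)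
      = Real.Gamma ((n + 3/4) + 1/2) / Real.Gamma ((n : ℝ) + 3/4) := by ring_nf
    _ ≤ Real.sqrt ((n : ℝ) + 3/4) := Real.Gamma_add_half_div_Gamma_le_sqrt_s12 (by positivity)
    _ < Real.sqrt ((n : ℝ) + 1) := Real.sqrt_lt_sqrt (by positivity) (by linarith)
end

section
/- (Gautschi's inequality, extended to real argument.) For every real x > 0 and every s ∈ [0,1] one has (x+1)^{s−1} ≤ Γ(x+s)/Γ(x+1) ≤ x^{s−1}; moreover the second inequality is strict whenever 0 < s < 1. -/
/-!
Everything comes from the (strict) log-convexity of `Γ` on `(0, ∞)` together with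
`log Γ(y + 1) = log y + log Γ(y)`. Interpolating `log Γ` between `x` and `x + 1` gives the upper
bound, and between `x + s` and `x + s + 1` gives `(x + s) ^ (s - 1) ≤ Γ(x + s) / Γ(x + 1)`, which
is at least `(x + 1) ^ (s - 1)`. Strict convexity holds because `log Γ(y) = log Γ(y + 1) - log y`
is a convex function plus a strictly convex one.
-/

open Set

namespace Real

theorem log_Gamma_add_one {y : ℝ} (hy : 0 < y) :
    log (Gamma (y + 1)) = log y + log (Gamma y) := by
  rw [Gamma_add_one hy.ne', log_mul hy.ne' (Gamma_pos_of_pos hy).ne']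

theorem strictConvexOn_log_Gamma : StrictConvexOn ℝ (Ioi 0) (log ∘ Gamma) := by
  have hshift : ConvexOn ℝ (Ioi 0) (fun y => log (Gamma (y + 1))) := by
    refine ((convexOn_log_Gamma.translate_right 1).subset ?_ (convex_Ioi 0)).congr ?_
    · intro y hy
      simp only [mem_preimage, mem_Ioi] at hy ⊢
      linarith
    · intro y _
      simp only [Function.comp_apply, add_comm]
  refine (strictConcaveOn_log_Ioi.neg.add_convexOn hshift).congr fun y hy => ?_
  simp only [Pi.add_apply, Pi.neg_apply, Function.comp_apply, log_Gamma_add_one (mem_Ioi.1 hy)]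
  ring

variable {x s : ℝ}

theorem Gamma_add_div_Gamma_add_one_le (hx : 0 < x) (hs0 : 0 ≤ s) (hs1 : s ≤ 1) :
    Gamma (x + s) / Gamma (x + 1) ≤ x ^ (s - 1) := by
  have h := convexOn_log_Gamma.2 (mem_Ioi.2 hx) (mem_Ioi.2 (by linarith : 0 < x + 1))
    (sub_nonneg.2 hs1) hs0 (sub_add_cancel 1 s)
  rw [show (1 - s) • x + s • (x + 1) = x + s by simp only [smul_eq_mul]; ring] at h
  simp only [Function.comp_apply, smul_eq_mul, log_Gamma_add_one hx] at h
  rw [← log_le_log_iff (by positivity) (by positivity), log_div (by positivity) (by positivity),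
    log_rpow hx, log_Gamma_add_one hx]
  linarith

theorem Gamma_add_div_Gamma_add_one_lt (hx : 0 < x) (hs0 : 0 < s) (hs1 : s < 1) :
    Gamma (x + s) / Gamma (x + 1) < x ^ (s - 1) := by
  have h := strictConvexOn_log_Gamma.2 (mem_Ioi.2 hx) (mem_Ioi.2 (by linarith : 0 < x + 1))
    (by linarith : x ≠ x + 1) (sub_pos.2 hs1) hs0 (sub_add_cancel 1 s)
  rw [show (1 - s) • x + s • (x + 1) = x + s by simp only [smul_eq_mul]; ring] at h
  simp only [Function.comp_apply, smul_eq_mul, log_Gamma_add_one hx] at h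
  rw [← log_lt_log_iff (by positivity) (by positivity), log_div (by positivity) (by positivity),
    log_rpow hx, log_Gamma_add_one hx]
  linarith

theorem rpow_le_Gamma_add_div_Gamma_add_one (hxs : 0 < x + s) (hs0 : 0 ≤ s) (hs1 : s ≤ 1) :
    (x + s) ^ (s - 1) ≤ Gamma (x + s) / Gamma (x + 1) := by
  have h := convexOn_log_Gamma.2 (mem_Ioi.2 hxs) (mem_Ioi.2 (by linarith : 0 < x + s + 1))
    hs0 (sub_nonneg.2 hs1) (add_sub_cancel s 1)
  rw [show s • (x + s) + (1 - s) • (x + s + 1) = x + 1 by simp only [smul_eq_mul]; ring] at h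
  simp only [Function.comp_apply, smul_eq_mul, log_Gamma_add_one hxs] at h
  have hΓs : 0 < Gamma (x + s) := Gamma_pos_of_pos hxs
  have hΓ1 : 0 < Gamma (x + 1) := Gamma_pos_of_pos (by linarith)
  rw [← log_le_log_iff (rpow_pos_of_pos hxs _) (div_pos hΓs hΓ1), log_div hΓs.ne' hΓ1.ne',
    log_rpow hxs]
  linarith

end Real

/-- Gautschi's inequality for the real Gamma function, extended to real argument. -/
theorem gautschi_inequality (x : ℝ) (hx : 0 < x) (s : ℝ) (hs0 : 0 ≤ s) (hs1 : s ≤ 1) :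
    (x + 1) ^ (s - 1) ≤ Real.Gamma (x + s) / Real.Gamma (x + 1) ∧
    Real.Gamma (x + s) / Real.Gamma (x + 1) ≤ x ^ (s - 1) ∧
    (0 < s → s < 1 → Real.Gamma (x + s) / Real.Gamma (x + 1) < x ^ (s - 1)) := by
  have hxs : 0 < x + s := by linarith
  refine ⟨?_, Real.Gamma_add_div_Gamma_add_one_le hx hs0 hs1,
    fun hs0' hs1' => Real.Gamma_add_div_Gamma_add_one_lt hx hs0' hs1'⟩
  calc (x + 1) ^ (s - 1) ≤ (x + s) ^ (s - 1) :=
        Real.rpow_le_rpow_of_nonpos hxs (by linarith) (by linarith)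
    _ ≤ Real.Gamma (x + s) / Real.Gamma (x + 1) :=
        Real.rpow_le_Gamma_add_div_Gamma_add_one hxs hs0 hs1
end
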